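/- arXiv:1505.07549 — 5 statements merged into one kernel-verified Lean document; each statement's English description precedes it below -/
import Mathlib

section
/- For all integers n, m ≥ 3, f(n,m) = C(m+n-4, n-2), where C denotes the binomial coefficient. That is, the largest cardinality of a finite set of points in the plane, in general position and with pairwise distinct x-coordinates, containing no n-cup and no m-cap, equals C(m+n-4, n-2). -/
/-!
Common definitions: points in the plane, general position, distinct x-coordinates,
cups, caps, convex position, and the combinatorial functions from the paper.
-/

open Finset

/-- A point in the Euclidean plane, with `p.1` its x-coordinate and `p.2` its y-coordinate. -/
abbrev Pt : Type := ℝ × ℝ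

/-- A set of points is in general position if no three (distinct) of its points are collinear. -/
def GenPos (S : Set Pt) : Prop :=
  ∀ p ∈ S, ∀ q ∈ S, ∀ r ∈ S, p ≠ q → p ≠ r → q ≠ r → ¬ Collinear ℝ ({p, q, r} : Set Pt)

/-- A set of points has pairwise distinct x-coordinates. -/
def DistinctX (S : Set Pt) : Prop :=
  ∀ p ∈ S, ∀ q ∈ S, p ≠ q → p.1 ≠ q.1

/-- The slope of the segment from `p` to `q`. -/
noncomputable def PtSlope (p q : Pt) : ℝ := (q.2 - p.2) / (q.1 - p.1)

/-- `f 0, f 1, …, f (k-1)` is a `k`-cup in `P`: the points lie in `P`, are listed in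
increasing order of x-coordinate, and the slopes of consecutive segments strictly increase. -/
def IsCupSeq (k : ℕ) (P : Set Pt) (f : ℕ → Pt) : Prop :=
  (∀ i, i < k → f i ∈ P) ∧
  (∀ i j, i < j → j < k → (f i).1 < (f j).1) ∧
  (∀ i, i + 2 < k → PtSlope (f i) (f (i + 1)) < PtSlope (f (i + 1)) (f (i + 2)))

/-- `f 0, f 1, …, f (k-1)` is a `k`-cap in `P`: the points lie in `P`, are listed in
increasing order of x-coordinate, and the slopes of consecutive segments strictly decrease. -/
def IsCapSeq (k : ℕ) (P : Set Pt) (f : ℕ → Pt) : Prop :=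
  (∀ i, i < k → f i ∈ P) ∧
  (∀ i j, i < j → j < k → (f i).1 < (f j).1) ∧
  (∀ i, i + 2 < k → PtSlope (f i) (f (i + 1)) > PtSlope (f (i + 1)) (f (i + 2)))

/-- `P` contains a `k`-cup. -/
def HasCup (k : ℕ) (P : Set Pt) : Prop := ∃ f : ℕ → Pt, IsCupSeq k P f

/-- `P` contains a `k`-cap. -/
def HasCap (k : ℕ) (P : Set Pt) : Prop := ∃ f : ℕ → Pt, IsCapSeq k P f

/-- `S` is `(n, m)`-free: it contains no `n`-cup and no `m`-cap. -/
def IsFree (n m : ℕ) (S : Set Pt) : Prop := ¬ HasCup n S ∧ ¬ HasCap m S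

/-- A set of points is in convex position: every point of the set is a vertex (extreme point)
of its convex hull, i.e. no point lies in the convex hull of the others. -/
def ConvexPos (S : Set Pt) : Prop := ∀ p ∈ S, p ∉ convexHull ℝ (S \ {p})

/-- `S` contains `n` points in convex position. -/
def HasConvexNGon (n : ℕ) (S : Set Pt) : Prop :=
  ∃ T : Finset Pt, ↑T ⊆ S ∧ T.card = n ∧ ConvexPos ↑T

/-- The set of cardinalities of finite planar point sets, in general position with pairwise
distinct x-coordinates, containing no `n`-cup and no `m`-cap.  The Erdős–Szekeres cup–cap
number `f(n, m)` is the greatest element of this set. -/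
def CupCapCards (n m : ℕ) : Set ℕ :=
  {N : ℕ | ∃ S : Finset Pt, S.card = N ∧ GenPos ↑S ∧ DistinctX ↑S ∧
    ¬ HasCup n ↑S ∧ ¬ HasCap m ↑S}

/-- The defining property of the Erdős–Szekeres number `f(n) = N`: `N` is the smallest
positive integer such that every set of `N` points in general position in the plane
contains `n` points in convex position. -/
def IsESNumber (n N : ℕ) : Prop :=
  IsLeast {N : ℕ | 0 < N ∧
    ∀ S : Finset Pt, GenPos ↑S → S.card = N → HasConvexNGon n ↑S} N

/-- The point `r` lies strictly below the (non-vertical) line through `p` and `q`. -/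
noncomputable def StrictlyBelow (p q r : Pt) : Prop :=
  r.2 < p.2 + PtSlope p q * (r.1 - p.1)

/-- The point `s ∈ S` is `(m, l)`-good: for every `n ≥ 4` and every finite set `B` of at most
`n - 2` points such that `S ∪ B` is in general position with pairwise distinct x-coordinates
and contains an `(n-1)`-cup with leftmost point `s` and rightmost point in `B`, the set
`S ∪ B` contains an `l`-cap whose two rightmost points lie in `S`, or an `m`-cup whose two
leftmost points lie in `S`, or `n` points in convex position. -/
def IsGoodPoint (m l : ℕ) (S : Finset Pt) (s : Pt) : Prop :=
  ∀ n : ℕ, 4 ≤ n → ∀ B : Finset Pt, B.card ≤ n - 2 →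
    GenPos ↑(S ∪ B) → DistinctX ↑(S ∪ B) →
    (∃ f : ℕ → Pt, IsCupSeq (n - 1) ↑(S ∪ B) f ∧ f 0 = s ∧ f (n - 2) ∈ B) →
    ((∃ f : ℕ → Pt, IsCapSeq l ↑(S ∪ B) f ∧ f (l - 2) ∈ S ∧ f (l - 1) ∈ S) ∨
     (∃ f : ℕ → Pt, IsCupSeq m ↑(S ∪ B) f ∧ f 0 ∈ S ∧ f 1 ∈ S) ∨
     HasConvexNGon n ↑(S ∪ B))

/-- The weight functions `wᵢ(m, k)` from the paper. -/
def w (i m k : ℕ) : ℕ :=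
  if i = 4 then
    Nat.choose (m + k - 6) (k - 2) + Nat.choose (m + k - 7) (k - 3) +
      2 * Nat.choose (m + k - 8) (k - 4)
  else if k < i then 0
  else (i - 1) * Nat.choose (m + k - i - 4) (k - i)

/-- `g(m, l) = Σ_{i=4}^{∞} wᵢ(m, l) = Σ_{i=4}^{l} wᵢ(m, l)` (the sum is finite since
`wᵢ(m, l) = 0` for `i > l`). -/
def g (m l : ℕ) : ℕ := ∑ i ∈ Finset.Icc 4 l, w i m l

/-!
Upper bound: let `T ⊆ S` be the set of last points of `(n-1)`-cups. Then `S \ T` has no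
`(n-1)`-cup, and `T` has no `(m-1)`-cap, since such a cap starting at the end of an
`(n-1)`-cup would extend either the cup or the cap to an `n`-cup or an `m`-cap. Pascal's rule
gives the bound by induction on `n + m`.

Lower bound: put an extremal set for `(n-1, m)` on the left and, far to the right and much
higher up, an extremal set for `(n, m-1)`. A cup can leave the left part only at its last
point, and a cap can enter the right part only after its first point.
-/

lemma ptSlope_mul_sub {p q : Pt} (h : p.1 ≠ q.1) : PtSlope p q * (q.1 - p.1) = q.2 - p.2 :=
  div_mul_cancel₀ _ (sub_ne_zero.2 h.symm)

@[simp]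
lemma ptSlope_add (p q v : Pt) : PtSlope (p + v) (q + v) = PtSlope p q := by
  simp only [PtSlope, Prod.fst_add, Prod.snd_add, add_sub_add_right_eq_sub]

lemma collinear_of_ptSlope_eq {p q r : Pt} (hpq : p.1 ≠ q.1) (hqr : q.1 ≠ r.1)
    (h : PtSlope p q = PtSlope q r) : Collinear ℝ ({p, q, r} : Set Pt) := by
  have hq := ptSlope_mul_sub hpq
  have hr := ptSlope_mul_sub hqr
  rw [← h] at hr
  refine (collinear_iff_of_mem (Set.mem_insert p _)).2 ⟨(1, PtSlope p q), ?_⟩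
  rintro x (rfl | rfl | rfl)
  · exact ⟨0, by simp⟩
  all_goals exact ⟨x.1 - p.1, Prod.ext (by simp) (by
    simp only [Prod.smul_mk, smul_eq_mul, mul_one, vadd_eq_add, Prod.snd_add]; linarith)⟩

lemma ptSlope_eq_of_collinear {p q r : Pt} (hpq : p.1 ≠ q.1) (hqr : q.1 ≠ r.1)
    (h : Collinear ℝ ({p, q, r} : Set Pt)) : PtSlope p q = PtSlope q r := by
  obtain ⟨v, hv⟩ := (collinear_iff_of_mem (Set.mem_insert p _)).1 h
  obtain ⟨s, rfl⟩ := hv q (by simp)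
  obtain ⟨t, rfl⟩ := hv r (by simp)
  simp only [PtSlope, vadd_eq_add, Prod.fst_add, Prod.snd_add, Prod.smul_fst, Prod.smul_snd,
    smul_eq_mul] at hpq hqr ⊢
  rw [div_eq_div_iff (sub_ne_zero.2 hpq.symm) (sub_ne_zero.2 hqr.symm)]
  ring

def SlopeGenPos (S : Set Pt) : Prop :=
  ∀ p ∈ S, ∀ q ∈ S, ∀ r ∈ S, p.1 < q.1 → q.1 < r.1 → PtSlope p q ≠ PtSlope q r

lemma DistinctX.mono {S T : Set Pt} (h : DistinctX S) (hTS : T ⊆ S) : DistinctX T :=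
  fun p hp q hq => h p (hTS hp) q (hTS hq)

lemma SlopeGenPos.mono {S T : Set Pt} (h : SlopeGenPos S) (hTS : T ⊆ S) : SlopeGenPos T :=
  fun p hp q hq r hr => h p (hTS hp) q (hTS hq) r (hTS hr)

lemma GenPos.slopeGenPos {S : Set Pt} (h : GenPos S) : SlopeGenPos S := by
  intro p hp q hq r hr hpq hqr hs
  refine h p hp q hq r hr ?_ ?_ ?_ (collinear_of_ptSlope_eq hpq.ne hqr.ne hs) <;>
    rintro rfl <;> linarith

lemma SlopeGenPos.genPos {S : Set Pt} (hd : DistinctX S) (h : SlopeGenPos S) : GenPos S := by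
  intro p hp q hq r hr hpq hpr hqr hcol
  have hS : ({p, q, r} : Set Pt) ⊆ S := by
    simp only [Set.insert_subset_iff, Set.singleton_subset_iff]; exact ⟨hp, hq, hr⟩
  have sorted : ∀ a ∈ ({p, q, r} : Set Pt), ∀ b ∈ ({p, q, r} : Set Pt),
      ∀ c ∈ ({p, q, r} : Set Pt), a.1 < b.1 → b.1 < c.1 → False := by
    intro a ha b hb c hc hab hbc
    have hsub : ({a, b, c} : Set Pt) ⊆ {p, q, r} := by
      simp only [Set.insert_subset_iff, Set.singleton_subset_iff]; exact ⟨ha, hb, hc⟩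
    exact h.mono hS a ha b hb c hc hab hbc
      (ptSlope_eq_of_collinear hab.ne hbc.ne (hcol.subset hsub))
  rcases (hd p hp q hq hpq).lt_or_gt with h₁ | h₁ <;>
    rcases (hd q hq r hr hqr).lt_or_gt with h₂ | h₂ <;>
    rcases (hd p hp r hr hpr).lt_or_gt with h₃ | h₃
  · exact sorted p (by simp) q (by simp) r (by simp) h₁ h₂
  · linarith
  · exact sorted p (by simp) r (by simp) q (by simp) h₃ h₂
  · exact sorted r (by simp) p (by simp) q (by simp) h₃ h₁
  · exact sorted q (by simp) p (by simp) r (by simp) h₁ h₃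
  · exact sorted q (by simp) r (by simp) p (by simp) h₂ h₃
  · linarith
  · exact sorted r (by simp) q (by simp) p (by simp) h₂ h₁

lemma HasCup.mono {k : ℕ} {P Q : Set Pt} (h : HasCup k P) (hPQ : P ⊆ Q) : HasCup k Q :=
  h.imp fun _ hf => ⟨fun i hi => hPQ (hf.1 i hi), hf.2⟩

lemma HasCap.mono {k : ℕ} {P Q : Set Pt} (h : HasCap k P) (hPQ : P ⊆ Q) : HasCap k Q :=
  h.imp fun _ hf => ⟨fun i hi => hPQ (hf.1 i hi), hf.2⟩

lemma HasCup.of_image_add {k : ℕ} {P : Set Pt} {v : Pt} (h : HasCup k ((· + v) '' P)) :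
    HasCup k P := by
  obtain ⟨f, hmem, hx, hs⟩ := h
  refine ⟨fun i => f i - v, fun i hi => ?_, fun i j hij hj => ?_, fun i hi => ?_⟩
  · obtain ⟨p, hp, hpf⟩ := hmem i hi
    simpa [← hpf] using hp
  · simpa using hx i j hij hj
  · simpa only [sub_eq_add_neg, ptSlope_add] using hs i hi

lemma HasCap.of_image_add {k : ℕ} {P : Set Pt} {v : Pt} (h : HasCap k ((· + v) '' P)) :
    HasCap k P := by
  obtain ⟨f, hmem, hx, hs⟩ := h
  refine ⟨fun i => f i - v, fun i hi => ?_, fun i j hij hj => ?_, fun i hi => ?_⟩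
  · obtain ⟨p, hp, hpf⟩ := hmem i hi
    simpa [← hpf] using hp
  · simpa using hx i j hij hj
  · simpa only [sub_eq_add_neg, ptSlope_add] using hs i hi

lemma DistinctX.image_add {P : Set Pt} (h : DistinctX P) (v : Pt) :
    DistinctX ((· + v) '' P) := by
  rintro _ ⟨p, hp, rfl⟩ _ ⟨q, hq, rfl⟩ hpq
  simpa using h p hp q hq (by rintro rfl; exact hpq rfl)

lemma SlopeGenPos.image_add {P : Set Pt} (h : SlopeGenPos P) (v : Pt) :
    SlopeGenPos ((· + v) '' P) := by
  rintro _ ⟨p, hp, rfl⟩ _ ⟨q, hq, rfl⟩ _ ⟨r, hr, rfl⟩ hpq hqr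
  simpa using h p hp q hq r hr (by simpa using hpq) (by simpa using hqr)

lemma not_hasCup_singleton {k : ℕ} (hk : 2 ≤ k) (p : Pt) : ¬HasCup k {p} := by
  rintro ⟨f, hmem, hx, -⟩
  have h := hx 0 1 one_pos hk
  rw [hmem 0 (by omega), hmem 1 hk] at h
  exact h.false

lemma not_hasCap_singleton {k : ℕ} (hk : 2 ≤ k) (p : Pt) : ¬HasCap k {p} := by
  rintro ⟨f, hmem, hx, -⟩
  have h := hx 0 1 one_pos hk
  rw [hmem 0 (by omega), hmem 1 hk] at h
  exact h.false

lemma isCupSeq_two {P : Set Pt} {p q : Pt} (hp : p ∈ P) (hq : q ∈ P) (hpq : p.1 < q.1) :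
    IsCupSeq 2 P (fun i => if i = 0 then p else q) := by
  refine ⟨fun i hi => ?_, fun i j hij hj => ?_, fun i hi => by omega⟩
  · interval_cases i <;> simpa
  · obtain rfl : i = 0 := by omega
    obtain rfl : j = 1 := by omega
    simpa

lemma card_le_one_of_not_hasCup_two {S : Finset Pt} (hd : DistinctX ↑S) (h : ¬HasCup 2 ↑S) :
    #S ≤ 1 := by
  refine Finset.card_le_one.2 fun p hp q hq => by_contra fun hpq => h ?_
  rcases (hd p hp q hq hpq).lt_or_gt with hlt | hlt
  exacts [⟨_, isCupSeq_two hp hq hlt⟩, ⟨_, isCupSeq_two hq hp hlt⟩]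

lemma card_le_one_of_not_hasCap_two {S : Finset Pt} (hd : DistinctX ↑S) (h : ¬HasCap 2 ↑S) :
    #S ≤ 1 :=
  card_le_one_of_not_hasCup_two hd fun ⟨f, hmem, hx, _⟩ =>
    h ⟨f, hmem, hx, fun i hi => by omega⟩

lemma IsCupSeq.snoc {k : ℕ} {P : Set Pt} {f : ℕ → Pt} {q : Pt} (hf : IsCupSeq (k + 2) P f)
    (hq : q ∈ P) (hx : (f (k + 1)).1 < q.1)
    (hs : PtSlope (f k) (f (k + 1)) < PtSlope (f (k + 1)) q) :
    IsCupSeq (k + 3) P (Function.update f (k + 2) q) := by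
  refine ⟨fun i hi => ?_, fun i j hij hj => ?_, fun i hi => ?_⟩
  · rcases eq_or_ne i (k + 2) with rfl | hik
    · simpa
    · simpa [hik] using hf.1 i (by omega)
  · rcases eq_or_ne j (k + 2) with rfl | hjk
    · have hfi : (f i).1 ≤ (f (k + 1)).1 := by
        rcases eq_or_lt_of_le (show i ≤ k + 1 by omega) with rfl | hi
        exacts [le_rfl, (hf.2.1 i (k + 1) hi (by omega)).le]
      simpa [hij.ne] using hfi.trans_lt hx
    · rw [Function.update_of_ne hjk, Function.update_of_ne (by omega)]
      exact hf.2.1 i j hij (by omega)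
  · rcases eq_or_ne i k with rfl | hik
    · simpa using hs
    · rw [Function.update_of_ne (by omega), Function.update_of_ne (by omega),
        Function.update_of_ne (by omega)]
      exact hf.2.2 i (by omega)

lemma IsCapSeq.cons {k : ℕ} {P : Set Pt} {g : ℕ → Pt} {p : Pt} (hg : IsCapSeq (k + 2) P g)
    (hp : p ∈ P) (hx : p.1 < (g 0).1) (hs : PtSlope p (g 0) > PtSlope (g 0) (g 1)) :
    IsCapSeq (k + 3) P (fun | 0 => p | i + 1 => g i) := by
  refine ⟨fun i hi => ?_, fun i j hij hj => ?_, fun i hi => ?_⟩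
  · rcases i with _ | i
    exacts [hp, hg.1 i (by omega)]
  · obtain ⟨j, rfl⟩ : ∃ j', j = j' + 1 := ⟨j - 1, by omega⟩
    rcases i with _ | i
    · rcases j.eq_zero_or_pos with rfl | hj0
      exacts [hx, hx.trans (hg.2.1 0 j hj0 (by omega))]
    · exact hg.2.1 i j (by omega) (by omega)
  · rcases i with _ | i
    exacts [hs, hg.2.2 i (by omega)]

/-- At the common point the path turns one way or the other, so either the cup or the cap
extends by one point. -/
lemma hasCup_or_hasCap_of_cup_last_eq_cap_head {k l : ℕ} {P : Set Pt} (hP : SlopeGenPos P)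
    {f g : ℕ → Pt} (hf : IsCupSeq (k + 2) P f) (hg : IsCapSeq (l + 2) P g)
    (hfg : f (k + 1) = g 0) : HasCup (k + 3) P ∨ HasCap (l + 3) P := by
  have hx₁ : (f k).1 < (g 0).1 := hfg ▸ hf.2.1 k (k + 1) k.lt_succ_self (by omega)
  have hx₂ : (g 0).1 < (g 1).1 := hg.2.1 0 1 one_pos (by omega)
  rcases (hP _ (hf.1 k (by omega)) _ (hg.1 0 (by omega)) _ (hg.1 1 (by omega)) hx₁ hx₂).lt_or_gt
    with hs | hs
  · rw [← hfg] at hs hx₂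
    exact .inl ⟨_, hf.snoc (hg.1 1 (by omega)) hx₂ hs⟩
  · exact .inr ⟨_, hg.cons (hf.1 k (by omega)) hx₁ hs⟩

lemma Nat.choose_succ_add_succ (a b : ℕ) :
    (a + 1 + (b + 1)).choose (a + 1) = (a + (b + 1)).choose a + (a + 1 + b).choose (a + 1) := by
  rw [show a + 1 + (b + 1) = a + b + 1 + 1 by omega, Nat.choose_succ_succ,
    show a + (b + 1) = a + b + 1 by omega, show a + 1 + b = a + b + 1 by omega]

open Classical in
noncomputable def cupEnds (k : ℕ) (S : Finset Pt) : Finset Pt :=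
  S.filter fun p => ∃ f : ℕ → Pt, IsCupSeq (k + 1) ↑S f ∧ f k = p

open Classical in
lemma mem_cupEnds {k : ℕ} {S : Finset Pt} {p : Pt} :
    p ∈ cupEnds k S ↔ p ∈ S ∧ ∃ f : ℕ → Pt, IsCupSeq (k + 1) ↑S f ∧ f k = p :=
  Finset.mem_filter

lemma cupEnds_subset (k : ℕ) (S : Finset Pt) : cupEnds k S ⊆ S :=
  fun _ hp => (mem_cupEnds.1 hp).1

lemma not_hasCup_sdiff_cupEnds (k : ℕ) (S : Finset Pt) :
    ¬HasCup (k + 1) ↑(S \ cupEnds k S) := by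
  rintro ⟨f, hf⟩
  have hfS : IsCupSeq (k + 1) ↑S f := ⟨fun i hi => (Finset.mem_sdiff.1 (hf.1 i hi)).1, hf.2⟩
  have hlast := Finset.mem_sdiff.1 (hf.1 k k.lt_succ_self)
  exact hlast.2 (mem_cupEnds.2 ⟨hlast.1, f, hfS, rfl⟩)

lemma not_hasCap_cupEnds {k l : ℕ} {S : Finset Pt} (hS : SlopeGenPos ↑S)
    (hcup : ¬HasCup (k + 3) ↑S) (hcap : ¬HasCap (l + 3) ↑S) :
    ¬HasCap (l + 2) ↑(cupEnds (k + 1) S) := by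
  rintro ⟨g, hg⟩
  obtain ⟨-, f, hf, hfg⟩ := mem_cupEnds.1 (hg.1 0 (by omega))
  have hgS : IsCapSeq (l + 2) ↑S g := ⟨fun i hi => cupEnds_subset _ _ (hg.1 i hi), hg.2⟩
  exact (hasCup_or_hasCap_of_cup_last_eq_cap_head hS hf hgS hfg).elim hcup hcap

theorem card_le_choose_of_not_hasCup_of_not_hasCap (a b : ℕ) {S : Finset Pt}
    (hd : DistinctX ↑S) (hS : SlopeGenPos ↑S) (hcup : ¬HasCup (a + 2) ↑S)
    (hcap : ¬HasCap (b + 2) ↑S) : #S ≤ (a + b).choose a := by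
  induction a generalizing b S with
  | zero => simpa using card_le_one_of_not_hasCup_two hd hcup
  | succ a iha =>
    induction b generalizing S with
    | zero => simpa using card_le_one_of_not_hasCap_two hd hcap
    | succ b ihb =>
      have hT := cupEnds_subset (a + 1) S
      have hT' : (↑(cupEnds (a + 1) S) : Set Pt) ⊆ ↑S := Finset.coe_subset.2 hT
      have hD : (↑(S \ cupEnds (a + 1) S) : Set Pt) ⊆ ↑S :=
        Finset.coe_subset.2 Finset.sdiff_subset
      calc #S = #(S \ cupEnds (a + 1) S) + #(cupEnds (a + 1) S) :=
            (Finset.card_sdiff_add_card_eq_card hT).symm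
        _ ≤ (a + (b + 1)).choose a + (a + 1 + b).choose (a + 1) := by
          refine add_le_add (iha (b + 1) (hd.mono hD) (hS.mono hD) ?_ ?_) ?_
          · exact not_hasCup_sdiff_cupEnds (a + 1) S
          · exact fun h => hcap (h.mono hD)
          · exact ihb (hd.mono hT') (hS.mono hT') (fun h => hcup (h.mono hT'))
              (not_hasCap_cupEnds hS hcup hcap)
        _ = (a + 1 + (b + 1)).choose (a + 1) := (Nat.choose_succ_add_succ a b).symm

structure SteepSeparated (c : ℝ) (L R : Set Pt) : Prop where
  slope_left_lt : ∀ p ∈ L, ∀ q ∈ L, PtSlope p q < c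
  slope_right_lt : ∀ p ∈ R, ∀ q ∈ R, PtSlope p q < c
  fst_lt : ∀ p ∈ L, ∀ q ∈ R, p.1 < q.1
  lt_slope : ∀ p ∈ L, ∀ q ∈ R, c < PtSlope p q

namespace SteepSeparated

variable {c : ℝ} {L R : Set Pt}

lemma mem_right_of_lt (h : SteepSeparated c L R) {p q : Pt} (hp : p ∈ R) (hq : q ∈ L ∪ R)
    (hpq : p.1 < q.1) : q ∈ R :=
  hq.resolve_left fun hqL => (h.fst_lt q hqL p hp).not_gt hpq

lemma mem_left_of_lt (h : SteepSeparated c L R) {p q : Pt} (hp : p ∈ L ∪ R) (hq : q ∈ L)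
    (hpq : p.1 < q.1) : p ∈ L :=
  hp.resolve_right fun hpR => (h.fst_lt q hq p hpR).not_gt hpq

lemma disjoint (h : SteepSeparated c L R) : Disjoint L R :=
  Set.disjoint_left.2 fun p hL hR => (h.fst_lt p hL p hR).false

lemma distinctX_union (h : SteepSeparated c L R) (hL : DistinctX L) (hR : DistinctX R) :
    DistinctX (L ∪ R) := by
  rintro p (hp | hp) q (hq | hq) hpq
  · exact hL p hp q hq hpq
  · exact (h.fst_lt p hp q hq).ne
  · exact (h.fst_lt q hq p hp).ne'
  · exact hR p hp q hq hpq

lemma slopeGenPos_union (h : SteepSeparated c L R) (hL : SlopeGenPos L) (hR : SlopeGenPos R) :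
    SlopeGenPos (L ∪ R) := by
  rintro p (hp | hp) q hq r hr hpq hqr
  · rcases hq with hq | hq
    · rcases hr with hr | hr
      · exact hL p hp q hq r hr hpq hqr
      · exact ((h.slope_left_lt p hp q hq).trans (h.lt_slope q hq r hr)).ne
    · have hr := h.mem_right_of_lt hq hr hqr
      exact ((h.slope_right_lt q hq r hr).trans (h.lt_slope p hp q hq)).ne'
  · have hq := h.mem_right_of_lt hp hq hpq
    exact hR p hp q hq r (h.mem_right_of_lt hq hr hqr) hpq hqr

/-- A cup can leave `L` only at its last point, since after a steep step it cannot flatten. -/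
lemma hasCup_union (h : SteepSeparated c L R) {k : ℕ} (hcup : HasCup (k + 1) (L ∪ R)) :
    HasCup k L ∨ HasCup (k + 1) R := by
  obtain ⟨f, hmem, hx, hs⟩ := hcup
  by_cases h₀ : f 0 ∈ R
  · refine .inr ⟨f, fun i hi => ?_, hx, hs⟩
    rcases i.eq_zero_or_pos with rfl | hi₀
    exacts [h₀, h.mem_right_of_lt h₀ (hmem i hi) (hx 0 i hi₀ hi)]
  have hL : ∀ i, i < k → f i ∈ L := by
    intro i hi
    induction i with
    | zero => exact (hmem 0 (by omega)).resolve_right h₀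
    | succ i ih =>
      by_contra hiL
      have h₁ : f (i + 1) ∈ R := (hmem (i + 1) (by omega)).resolve_left hiL
      have h₂ : f (i + 2) ∈ R :=
        h.mem_right_of_lt h₁ (hmem (i + 2) (by omega)) (hx _ _ (by omega) (by omega))
      exact (hs i (by omega)).not_gt
        ((h.slope_right_lt _ h₁ _ h₂).trans (h.lt_slope _ (ih (by omega)) _ h₁))
  exact .inl ⟨f, hL, fun i j hij hj => hx i j hij (by omega), fun i hi => hs i (by omega)⟩

/-- A cap can enter `R` only after its first point, since after a flat step it cannot steepen. -/
lemma hasCap_union (h : SteepSeparated c L R) {k : ℕ} (hcap : HasCap (k + 2) (L ∪ R)) :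
    HasCap (k + 2) L ∨ HasCap (k + 1) R := by
  obtain ⟨f, hmem, hx, hs⟩ := hcap
  by_cases h₁ : f 1 ∈ R
  · refine .inr ⟨fun i => f (i + 1), fun i hi => ?_,
      fun i j hij hj => hx _ _ (by omega) (by omega), fun i hi => hs (i + 1) (by omega)⟩
    rcases i.eq_zero_or_pos with rfl | hi₀
    exacts [h₁, h.mem_right_of_lt h₁ (hmem _ (by omega)) (hx _ _ (by omega) (by omega))]
  have h₁L : f 1 ∈ L := (hmem 1 (by omega)).resolve_right h₁
  have hL : ∀ i, i < k + 2 → f i ∈ L := by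
    intro i
    induction i using Nat.twoStepInduction with
    | zero => exact fun _ => h.mem_left_of_lt (hmem 0 (by omega)) h₁L (hx 0 1 one_pos (by omega))
    | one => exact fun _ => h₁L
    | more i ih₀ ih₁ =>
      intro hi
      by_contra hiL
      have h₂ : f (i + 2) ∈ R := (hmem (i + 2) hi).resolve_left hiL
      exact (hs i hi).not_gt
        ((h.slope_left_lt _ (ih₀ (by omega)) _ (ih₁ (by omega))).trans
          (h.lt_slope _ (ih₁ (by omega)) _ h₂))
  exact .inl ⟨f, hL, hx, hs⟩

end SteepSeparated

lemma exists_steepSeparated_image_add (L R : Finset Pt) :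
    ∃ c v, SteepSeparated c ↑L ((· + v) '' ↑R) := by
  have hU : (↑L ∪ ↑R : Set Pt).Finite := L.finite_toSet.union R.finite_toSet
  obtain ⟨X, hX⟩ := (hU.image fun p => |p.1|).bddAbove
  obtain ⟨Y, hY⟩ := (hU.image fun p => |p.2|).bddAbove
  obtain ⟨K, hK⟩ := (hU.image2 PtSlope hU).bddAbove
  set c := max K 0 + 1
  have hc : 0 ≤ c := by positivity
  have hslope {p q : Pt} (hp : p ∈ (↑L ∪ ↑R : Set Pt)) (hq : q ∈ (↑L ∪ ↑R : Set Pt)) :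
      PtSlope p q < c :=
    (hK (Set.mem_image2_of_mem hp hq)).trans_lt (by linarith [le_max_left K 0])
  -- The x-gaps from `L` to the shifted `R` lie in `[1, 4X + 1]`; the y-shift beats `c` times that.
  refine ⟨c, (2 * X + 1, c * (4 * X + 1) + 2 * Y + 1), fun p hp q hq => ?_, ?_, ?_, ?_⟩
  · exact hslope (.inl hp) (.inl hq)
  · rintro _ ⟨p, hp, rfl⟩ _ ⟨q, hq, rfl⟩
    simpa using hslope (.inr hp) (.inr hq)
  · rintro p hp _ ⟨q, hq, rfl⟩
    have := abs_le.1 (hX ⟨p, .inl hp, rfl⟩)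
    have := abs_le.1 (hX ⟨q, .inr hq, rfl⟩)
    simp only [Prod.fst_add]
    linarith
  · rintro p hp _ ⟨q, hq, rfl⟩
    have := abs_le.1 (hX ⟨p, .inl hp, rfl⟩)
    have := abs_le.1 (hX ⟨q, .inr hq, rfl⟩)
    have := abs_le.1 (hY ⟨p, .inl hp, rfl⟩)
    have := abs_le.1 (hY ⟨q, .inr hq, rfl⟩)
    simp only [PtSlope, Prod.fst_add, Prod.snd_add]
    rw [lt_div_iff₀ (by linarith)]
    nlinarith

lemma singleton_free {k l : ℕ} (hk : 2 ≤ k) (hl : 2 ≤ l) (p : Pt) :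
    DistinctX {p} ∧ SlopeGenPos {p} ∧ ¬HasCup k {p} ∧ ¬HasCap l {p} := by
  refine ⟨?_, ?_, not_hasCup_singleton hk p, not_hasCap_singleton hl p⟩
  · rintro q rfl r rfl h
    exact absurd rfl h
  · rintro q rfl r rfl - - h
    exact (lt_irrefl _ h).elim

theorem exists_card_eq_choose_not_hasCup_not_hasCap (a b : ℕ) :
    ∃ S : Finset Pt, #S = (a + b).choose a ∧ DistinctX ↑S ∧ SlopeGenPos ↑S ∧
      ¬HasCup (a + 2) ↑S ∧ ¬HasCap (b + 2) ↑S := by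
  induction a generalizing b with
  | zero => exact ⟨{0}, by simp, by simpa using singleton_free (by omega) (by omega) 0⟩
  | succ a iha =>
    induction b with
    | zero => exact ⟨{0}, by simp, by simpa using singleton_free (by omega) (by omega) 0⟩
    | succ b ihb =>
      obtain ⟨L, hLc, hLd, hLs, hLcup, hLcap⟩ := iha (b + 1)
      obtain ⟨R, hRc, hRd, hRs, hRcup, hRcap⟩ := ihb
      obtain ⟨c, v, h⟩ := exists_steepSeparated_image_add L R
      have hcoe : (↑(L ∪ R.image (· + v)) : Set Pt) = ↑L ∪ (· + v) '' ↑R := by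
        rw [Finset.coe_union, Finset.coe_image]
      refine ⟨L ∪ R.image (· + v), ?_, ?_, ?_, ?_, ?_⟩
      · rw [Finset.card_union_of_disjoint, Finset.card_image_of_injective _ (add_left_injective v),
          hLc, hRc, Nat.choose_succ_add_succ]
        simpa [← Finset.disjoint_coe] using h.disjoint
      · rw [hcoe]
        exact h.distinctX_union hLd (hRd.image_add v)
      · rw [hcoe]
        exact h.slopeGenPos_union hLs (hRs.image_add v)
      · rw [hcoe]
        exact fun hcup => (h.hasCup_union hcup).elim hLcup fun hR => hRcup hR.of_image_add
      · rw [hcoe]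
        exact fun hcap => (h.hasCap_union hcap).elim hLcap fun hR => hRcap hR.of_image_add

/-- For all integers `n, m ≥ 3`, the largest cardinality of a finite planar
point set in general position with pairwise distinct x-coordinates containing no `n`-cup and
no `m`-cap equals `C(m + n - 4, n - 2)`. -/
theorem stmt_0 (n m : ℕ) (hn : 3 ≤ n) (hm : 3 ≤ m) :
    IsGreatest (CupCapCards n m) (Nat.choose (m + n - 4) (n - 2)) := by
  obtain ⟨a, rfl⟩ : ∃ a, n = a + 2 := ⟨n - 2, by omega⟩
  obtain ⟨b, rfl⟩ : ∃ b, m = b + 2 := ⟨m - 2, by omega⟩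
  rw [show b + 2 + (a + 2) - 4 = a + b by omega, Nat.add_sub_cancel]
  constructor
  · obtain ⟨S, hcard, hd, hS, hcup, hcap⟩ := exists_card_eq_choose_not_hasCup_not_hasCap a b
    exact ⟨S, hcard, hS.genPos hd, hd, hcup, hcap⟩
  · rintro N ⟨S, rfl, hg, hd, hcup, hcap⟩
    exact card_le_choose_of_not_hasCup_of_not_hasCap a b hd hg.slopeGenPos hcup hcap
end

section
/- Let m ≥ 4 and let S be a finite set of points in the plane, in general position with pairwise distinct x-coordinates, containing no m-cup and no 4-cap, with |S| > C(m-1, 2) + 1. Then S contains an (m-1)-cup v₁,…,v_{m-1} (listed in increasing order of x-coordinate) together with a point r ∈ S whose x-coordinate is larger than that of v_{m-1} and which lies strictly below the line through v_{m-2} and v_{m-1}. -/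
/-!
Common definitions: points in the plane, general position, distinct x-coordinates,
cups, caps, convex position, and the combinatorial functions from the paper.
-/

open Finset

open Finset

lemma ptSlope_spec (a b : Pt) (h : a.1 ≠ b.1) :
    b.2 = a.2 + PtSlope a b * (b.1 - a.1) := by
  have h' : b.1 - a.1 ≠ 0 := sub_ne_zero.mpr (Ne.symm h)
  rw [PtSlope, div_mul_cancel₀ _ h']
  ring

lemma slope_lt_of_above (a b c : Pt) (h1 : a.1 < b.1) (h2 : b.1 < c.1)
    (h : a.2 + PtSlope a b * (c.1 - a.1) < c.2) : PtSlope a b < PtSlope b c := by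
  have hb := ptSlope_spec a b h1.ne
  have hbc : (0:ℝ) < c.1 - b.1 := by linarith
  have e : PtSlope b c = (c.2 - b.2) / (c.1 - b.1) := rfl
  rw [e, lt_div_iff₀ hbc]
  have key : PtSlope a b * (c.1 - b.1)
      = PtSlope a b * (c.1 - a.1) - PtSlope a b * (b.1 - a.1) := by ring
  linarith

lemma collinear_of_line (s : ℝ) (a b c : Pt)
    (hb : b.2 = a.2 + s * (b.1 - a.1)) (hc : c.2 = a.2 + s * (c.1 - a.1)) :
    Collinear ℝ ({a, b, c} : Set Pt) := by
  have key : ∀ q ∈ ({a, b, c} : Set Pt), q.2 = a.2 + s * (q.1 - a.1) := by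
    rintro q (rfl | rfl | rfl)
    · ring
    · exact hb
    · exact hc
  rw [collinear_iff_of_mem (Set.mem_insert a {b, c})]
  refine ⟨(1, s), fun q hq => ⟨q.1 - a.1, ?_⟩⟩
  have hq2 := key q hq
  have : ((q.1 - a.1) • ((1 : ℝ), s) +ᵥ a) = (q.1 - a.1 + a.1, (q.1 - a.1) * s + a.2) := by
    simp [Prod.ext_iff, smul_eq_mul]
  rw [this]
  refine Prod.ext ?_ ?_
  · simp
  · simp only []
    rw [hq2]; ring

lemma aux_slope_ne {S : Set Pt} (hgp : GenPos S) {a b c : Pt}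
    (ha : a ∈ S) (hb : b ∈ S) (hc : c ∈ S)
    (h1 : a.1 < b.1) (h2 : b.1 < c.1) : PtSlope a b ≠ PtSlope b c := by
  intro h
  have hb2 := ptSlope_spec a b h1.ne
  have hc2 : c.2 = a.2 + PtSlope a b * (c.1 - a.1) := by
    have h3 := ptSlope_spec b c h2.ne
    rw [← h] at h3
    rw [h3, hb2]; ring
  exact hgp a ha b hb c hc (fun e => h1.ne (congrArg Prod.fst e))
    (fun e => (h1.trans h2).ne (congrArg Prod.fst e))
    (fun e => h2.ne (congrArg Prod.fst e))
    (collinear_of_line _ a b c hb2 hc2)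
lemma cupSeq_mono {k : ℕ} {P Q : Set Pt} {f : ℕ → Pt} (h : P ⊆ Q)
    (hf : IsCupSeq k P f) : IsCupSeq k Q f :=
  ⟨fun i hi => h (hf.1 i hi), hf.2.1, hf.2.2⟩

lemma capSeq_mono {k : ℕ} {P Q : Set Pt} {f : ℕ → Pt} (h : P ⊆ Q)
    (hf : IsCapSeq k P f) : IsCapSeq k Q f :=
  ⟨fun i hi => h (hf.1 i hi), hf.2.1, hf.2.2⟩

lemma hasCup_mono {k : ℕ} {P Q : Set Pt} (h : P ⊆ Q) : HasCup k P → HasCup k Q :=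
  fun ⟨f, hf⟩ => ⟨f, cupSeq_mono h hf⟩

lemma hasCap_mono {k : ℕ} {P Q : Set Pt} (h : P ⊆ Q) : HasCap k P → HasCap k Q :=
  fun ⟨f, hf⟩ => ⟨f, capSeq_mono h hf⟩

lemma cupSeq_restrict {k k' : ℕ} {P : Set Pt} {f : ℕ → Pt} (h : k' ≤ k)
    (hf : IsCupSeq k P f) : IsCupSeq k' P f :=
  ⟨fun i hi => hf.1 i (lt_of_lt_of_le hi h),
   fun i j hij hj => hf.2.1 i j hij (lt_of_lt_of_le hj h),
   fun i hi => hf.2.2 i (lt_of_lt_of_le hi h)⟩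

lemma genPos_mono {P Q : Set Pt} (h : P ⊆ Q) (hQ : GenPos Q) : GenPos P :=
  fun p hp q hq r hr => hQ p (h hp) q (h hq) r (h hr)

lemma distinctX_mono {P Q : Set Pt} (h : P ⊆ Q) (hQ : DistinctX Q) : DistinctX P :=
  fun p hp q hq => hQ p (h hp) q (h hq)

lemma cup2 {P : Set Pt} {a b : Pt} (ha : a ∈ P) (hb : b ∈ P)
    (h1 : a.1 < b.1) : HasCup 2 P := by
  refine ⟨fun i => if i = 0 then a else b, ?_, ?_, ?_⟩
  · intro i hi; interval_cases i
    · exact ha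
    · exact hb
  · intro i j hij hj; interval_cases j
    · omega
    · interval_cases i
      exact h1
  · intro i hi; omega

lemma cap3 {P : Set Pt} {a b c : Pt} (ha : a ∈ P) (hb : b ∈ P) (hc : c ∈ P)
    (h1 : a.1 < b.1) (h2 : b.1 < c.1) (hs : PtSlope b c < PtSlope a b) : HasCap 3 P := by
  refine ⟨fun i => if i = 0 then a else if i = 1 then b else c, ?_, ?_, ?_⟩
  · intro i hi; interval_cases i
    · exact ha
    · exact hb
    · exact hc
  · intro i j hij hj; interval_cases j
    · omega
    · interval_cases i
      exact h1
    · interval_cases i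
      · exact h1.trans h2
      · exact h2
  · intro i hi
    have : i = 0 := by omega
    subst this
    exact hs

lemma cap4 {P : Set Pt} {a b c d : Pt} (ha : a ∈ P) (hb : b ∈ P) (hc : c ∈ P) (hd : d ∈ P)
    (h1 : a.1 < b.1) (h2 : b.1 < c.1) (h3 : c.1 < d.1)
    (hs1 : PtSlope b c < PtSlope a b) (hs2 : PtSlope c d < PtSlope b c) : HasCap 4 P := by
  refine ⟨fun i => if i = 0 then a else if i = 1 then b else if i = 2 then c else d,
    ?_, ?_, ?_⟩
  · intro i hi; interval_cases i
    · exact ha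
    · exact hb
    · exact hc
    · exact hd
  · intro i j hij hj; interval_cases j
    · omega
    · interval_cases i
      exact h1
    · interval_cases i
      · exact h1.trans h2
      · exact h2
    · interval_cases i
      · exact (h1.trans h2).trans h3
      · exact h2.trans h3
      · exact h3
  · intro i hi
    have hi2 : i < 2 := by omega
    interval_cases i
    · exact hs1
    · exact hs2

lemma cup_extend {k : ℕ} {P : Set Pt} {f : ℕ → Pt} (hf : IsCupSeq (k + 2) P f)
    {d : Pt} (hd : d ∈ P) (hxd : (f (k + 1)).1 < d.1)
    (hs : PtSlope (f k) (f (k + 1)) < PtSlope (f (k + 1)) d) : HasCup (k + 3) P := by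
  obtain ⟨h1, h2, h3⟩ := hf
  set F : ℕ → Pt := fun i => if i < k + 2 then f i else d with hFdef
  have hFlt : ∀ i, i < k + 2 → F i = f i := fun i h => if_pos h
  have hFge : ∀ i, ¬ i < k + 2 → F i = d := fun i h => if_neg h
  refine ⟨F, ?_, ?_, ?_⟩
  · intro i hi
    by_cases h : i < k + 2
    · rw [hFlt i h]; exact h1 i h
    · rw [hFge i h]; exact hd
  · intro i j hij hj
    have hik : i < k + 2 := by omega
    rw [hFlt i hik]
    by_cases hjk : j < k + 2
    · rw [hFlt j hjk]; exact h2 i j hij hjk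
    · rw [hFge j hjk]
      rcases eq_or_lt_of_le (show i ≤ k + 1 by omega) with he | hl
      · rw [he]; exact hxd
      · exact lt_trans (h2 i (k + 1) hl (by omega)) hxd
  · intro i hi
    by_cases h : i + 2 < k + 2
    · rw [hFlt i (by omega), hFlt (i + 1) (by omega), hFlt (i + 2) h]
      exact h3 i h
    · have hik : i = k := by omega
      subst hik
      rw [hFlt i (by omega), hFlt (i + 1) (by omega), hFge (i + 2) (by omega)]
      exact hs
lemma cup_of_no_threeCap (T : Finset Pt) (hgp : GenPos ↑T) (hx : DistinctX ↑T)
    (hcap : ¬ HasCap 3 ↑T) : HasCup T.card ↑T := by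
  classical
  set n := T.card with hn
  have hinj : Set.InjOn Prod.fst (↑T : Set Pt) := by
    intro p hp q hq h
    by_contra hne
    exact hx p hp q hq hne h
  have hX : (T.image Prod.fst).card = n := by
    rw [Finset.card_image_of_injOn hinj]
  set e := (T.image Prod.fst).orderIsoOfFin hX with he
  have hg : ∀ i : Fin n, ∃ p, p ∈ T ∧ p.1 = (e i : ℝ) := by
    intro i
    have h2 := (e i).2
    rw [Finset.mem_image] at h2
    obtain ⟨p, hp, hpe⟩ := h2
    exact ⟨p, hp, hpe⟩
  choose g hgT hgx using hg
  have hmono : ∀ i j : Fin n, i < j → (g i).1 < (g j).1 := by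
    intro i j hij
    rw [hgx, hgx]
    exact_mod_cast (OrderIso.lt_iff_lt e).mpr hij
  set F : ℕ → Pt := fun i => if h : i < n then g ⟨i, h⟩ else ((0 : ℝ), (0 : ℝ)) with hF
  have hFeq : ∀ i (h : i < n), F i = g ⟨i, h⟩ := fun i h => dif_pos h
  have hgT' : ∀ i : Fin n, g i ∈ (↑T : Set Pt) := fun i => Finset.mem_coe.mpr (hgT i)
  refine ⟨F, ?_, ?_, ?_⟩
  · intro i hi
    rw [hFeq i hi]
    exact hgT' _
  · intro i j hij hj
    rw [hFeq i (by omega), hFeq j hj]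
    exact hmono _ _ (by simpa [Fin.lt_def] using hij)
  · intro i hi
    rw [hFeq i (by omega), hFeq (i + 1) (by omega), hFeq (i + 2) hi]
    set a := g ⟨i, by omega⟩
    set b := g ⟨i + 1, by omega⟩
    set c := g ⟨i + 2, hi⟩
    have h1 : a.1 < b.1 := hmono _ _ (by simp [Fin.lt_def])
    have h2 : b.1 < c.1 := hmono _ _ (by simp [Fin.lt_def])
    rcases lt_or_gt_of_ne (aux_slope_ne hgp (hgT' _) (hgT' _) (hgT' _) h1 h2) with h | h
    · exact h
    · exact absurd (cap3 (hgT' _) (hgT' _) (hgT' _) h1 h2 h) hcap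
lemma cupcap_bound : ∀ n : ℕ, 2 ≤ n → ∀ S : Finset Pt, GenPos ↑S → DistinctX ↑S →
    ¬ HasCup n ↑S → ¬ HasCap 4 ↑S → S.card ≤ n.choose 2 := by
  intro n hn
  induction n, hn using Nat.le_induction with
  | base =>
    intro S hgp hx hcup _
    by_contra h
    push_neg at h
    have h1 : 1 < S.card := by simpa using h
    obtain ⟨a, ha, b, hb, hab⟩ := Finset.one_lt_card.mp h1
    have ha' : a ∈ (↑S : Set Pt) := Finset.mem_coe.mpr ha
    have hb' : b ∈ (↑S : Set Pt) := Finset.mem_coe.mpr hb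
    rcases lt_or_gt_of_ne (hx a ha' b hb' hab) with h' | h'
    · exact hcup (cup2 ha' hb' h')
    · exact hcup (cup2 hb' ha' h')
  | succ n hn ih =>
    intro S hgp hx hcup hcap
    classical
    obtain ⟨k, rfl⟩ : ∃ k, n = k + 2 := ⟨n - 2, by omega⟩
    set E := S.filter (fun p => ∃ f, IsCupSeq (k + 2) (↑S : Set Pt) f ∧ f (k + 1) = p)
      with hEdef
    set F := S.filter (fun p => ¬ ∃ f, IsCupSeq (k + 2) (↑S : Set Pt) f ∧ f (k + 1) = p)
      with hFdef
    have hcards : E.card + F.card = S.card :=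
      Finset.card_filter_add_card_filter_not _
    have hES : (↑E : Set Pt) ⊆ ↑S := Finset.coe_subset.mpr (Finset.filter_subset _ _)
    have hFS : (↑F : Set Pt) ⊆ ↑S := Finset.coe_subset.mpr (Finset.filter_subset _ _)
    -- F has no (k+2)-cup
    have hFcup : ¬ HasCup (k + 2) ↑F := by
      rintro ⟨f, hf⟩
      have hend : f (k + 1) ∈ (↑F : Set Pt) := hf.1 (k + 1) (by omega)
      have hend' := Finset.mem_filter.mp (Finset.mem_coe.mp hend)
      exact hend'.2 ⟨f, cupSeq_mono hFS hf, rfl⟩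
    have hFcard : F.card ≤ (k + 2).choose 2 :=
      ih F (genPos_mono hFS hgp) (distinctX_mono hFS hx) hFcup
        (fun hc => hcap (hasCap_mono hFS hc))
    -- E has no 3-cap
    have hEcap : ¬ HasCap 3 ↑E := by
      rintro ⟨c, hc1, hc2, hc3⟩
      have hc0 : c 0 ∈ (↑E : Set Pt) := hc1 0 (by omega)
      have hc1' : c 1 ∈ (↑E : Set Pt) := hc1 1 (by omega)
      have hc2' : c 2 ∈ (↑E : Set Pt) := hc1 2 (by omega)
      obtain ⟨hc0S, u, hu, huend⟩ := Finset.mem_filter.mp (Finset.mem_coe.mp hc0)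
      have hc0S' : c 0 ∈ (↑S : Set Pt) := Finset.mem_coe.mpr hc0S
      have hc1S : c 1 ∈ (↑S : Set Pt) := hES hc1'
      have hc2S : c 2 ∈ (↑S : Set Pt) := hES hc2'
      have haS : u k ∈ (↑S : Set Pt) := hu.1 k (by omega)
      have hab : (u k).1 < (c 0).1 := by
        rw [← huend]; exact hu.2.1 k (k + 1) (by omega) (by omega)
      have hbc : (c 0).1 < (c 1).1 := hc2 0 1 (by omega) (by omega)
      have hcd : (c 1).1 < (c 2).1 := hc2 1 2 (by omega) (by omega)
      have hscap : PtSlope (c 1) (c 2) < PtSlope (c 0) (c 1) := hc3 0 (by omega)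
      rcases lt_trichotomy (PtSlope (u k) (c 0)) (PtSlope (c 0) (c 1)) with h | h | h
      · apply hcup
        refine cup_extend hu (hc1S) ?_ ?_
        · rw [huend]; exact hbc
        · rw [huend]; exact h
      · exact aux_slope_ne hgp haS hc0S' hc1S hab hbc h
      · exact hcap (cap4 haS hc0S' hc1S hc2S hab hbc hcd h hscap)
    -- E has at most k+2 points
    have hEcard : E.card ≤ k + 2 := by
      by_contra h
      push_neg at h
      have hcupE := cup_of_no_threeCap E (genPos_mono hES hgp) (distinctX_mono hES hx) hEcap
      obtain ⟨f, hf⟩ := hcupE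
      exact hcup ⟨f, cupSeq_mono hES (cupSeq_restrict (by omega) hf)⟩
    have hpascal : (k + 2 + 1).choose 2 = (k + 2) + (k + 2).choose 2 := by
      rw [Nat.choose_succ_succ (k + 2) 1,
        Nat.choose_one_right]
    omega


/-- Let `m ≥ 4` and let `S` be a finite planar point set in general position
with pairwise distinct x-coordinates, containing no `m`-cup and no `4`-cap, with
`|S| > C(m-1, 2) + 1`.  Then `S` contains an `(m-1)`-cup `v₁, …, v_{m-1}` (here
`v₁ = f 0, …, v_{m-1} = f (m-2)`, in increasing order of x-coordinate) together with a point
`r ∈ S` whose x-coordinate exceeds that of `v_{m-1}` and which lies strictly below the line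
through `v_{m-2}` and `v_{m-1}`. -/
theorem stmt_3 (m : ℕ) (hm : 4 ≤ m) (S : Finset Pt)
    (hgp : GenPos ↑S) (hx : DistinctX ↑S)
    (hcup : ¬ HasCup m ↑S) (hcap : ¬ HasCap 4 ↑S)
    (hcard : Nat.choose (m - 1) 2 + 1 < S.card) :
    ∃ f : ℕ → Pt, IsCupSeq (m - 1) ↑S f ∧
      ∃ r ∈ S, (f (m - 2)).1 < r.1 ∧ StrictlyBelow (f (m - 3)) (f (m - 2)) r := by
  classical
  obtain ⟨n, rfl⟩ : ∃ n, m = n + 4 := ⟨m - 4, by omega⟩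
  have e1 : n + 4 - 1 = n + 3 := by omega
  have e2 : n + 4 - 2 = n + 2 := by omega
  have e3 : n + 4 - 3 = n + 1 := by omega
  rw [e1, e2, e3]
  rw [e1] at hcard
  have hSne : S.Nonempty := Finset.card_pos.mp (by omega)
  obtain ⟨r, hrS, hrmax⟩ := S.exists_max_image Prod.fst hSne
  set S' := S.erase r with hS'
  have hS'sub : (↑S' : Set Pt) ⊆ ↑S := Finset.coe_subset.mpr (Finset.erase_subset _ _)
  have hcard' : (n + 3).choose 2 < S'.card := by
    rw [hS', Finset.card_erase_of_mem hrS]; omega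
  have hcup' : HasCup (n + 3) ↑S' := by
    by_contra h
    have := cupcap_bound (n + 3) (by omega) S' (genPos_mono hS'sub hgp)
      (distinctX_mono hS'sub hx) h (fun hc => hcap (hasCap_mono hS'sub hc))
    omega
  obtain ⟨f, hf⟩ := hcup'
  have hfS' : ∀ i, i < n + 3 → f i ∈ S' := fun i hi => Finset.mem_coe.mp (hf.1 i hi)
  have hfS : ∀ i, i < n + 3 → f i ∈ (↑S : Set Pt) := fun i hi => hS'sub (hf.1 i hi)
  refine ⟨f, cupSeq_mono hS'sub hf, r, hrS, ?_⟩
  have hne2 : f (n + 2) ≠ r := Finset.ne_of_mem_erase (hfS' (n + 2) (by omega))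
  have hx2 : (f (n + 2)).1 < r.1 :=
    lt_of_le_of_ne (hrmax _ (Finset.mem_coe.mp (hfS (n + 2) (by omega))))
      (hx _ (hfS (n + 2) (by omega)) r (Finset.mem_coe.mpr hrS) hne2)
  refine ⟨hx2, ?_⟩
  by_contra hbelow
  rw [StrictlyBelow] at hbelow
  push_neg at hbelow
  have h12 : (f (n + 1)).1 < (f (n + 2)).1 := hf.2.1 (n + 1) (n + 2) (by omega) (by omega)
  have hrS' : r ∈ (↑S : Set Pt) := Finset.mem_coe.mpr hrS
  rcases eq_or_lt_of_le hbelow with heq | hlt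
  · have hcol := collinear_of_line (PtSlope (f (n + 1)) (f (n + 2))) (f (n + 1)) (f (n + 2)) r
      (ptSlope_spec _ _ h12.ne) heq.symm
    exact hgp (f (n + 1)) (hfS _ (by omega)) (f (n + 2)) (hfS _ (by omega)) r hrS'
      (fun e => h12.ne (congrArg Prod.fst e))
      (fun e => (h12.trans hx2).ne (congrArg Prod.fst e))
      (fun e => hx2.ne (congrArg Prod.fst e)) hcol
  · have hs := slope_lt_of_above (f (n + 1)) (f (n + 2)) r h12 hx2 hlt
    exact hcup (cup_extend (cupSeq_mono hS'sub hf) hrS' hx2 hs)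
end

section
/- For all integers m, l ≥ 4, g(m+1, l+1) = g(m+1, l) + g(m, l+1), where g(m,l) = Σ_{i=4}^{l} w_i(m,l). -/
/-!
Common definitions: points in the plane, general position, distinct x-coordinates,
cups, caps, convex position, and the combinatorial functions from the paper.
-/

open Finset

lemma w_key (m l i : ℕ) (hm : 4 ≤ m) (hl : 4 ≤ l) (hi : 4 ≤ i) (hil : i ≤ l + 1) :
    w i (m + 1) (l + 1) = w i (m + 1) l + w i m (l + 1) := by
  rcases eq_or_lt_of_le hi with h4 | h5
  · -- i = 4
    subst h4
    obtain ⟨a, rfl⟩ : ∃ a, m = a + 4 := ⟨m - 4, by omega⟩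
    obtain ⟨b, rfl⟩ : ∃ b, l = b + 4 := ⟨l - 4, by omega⟩
    simp only [w]
    simp only [if_true]
    have e1 : a + 4 + 1 + (b + 4 + 1) - 6 = (a + b + 3) + 1 := by omega
    have e2 : b + 4 + 1 - 2 = (b + 2) + 1 := by omega
    have e3 : a + 4 + 1 + (b + 4 + 1) - 7 = (a + b + 2) + 1 := by omega
    have e4 : b + 4 + 1 - 3 = (b + 1) + 1 := by omega
    have e5 : a + 4 + 1 + (b + 4 + 1) - 8 = (a + b + 1) + 1 := by omega
    have e6 : b + 4 + 1 - 4 = b + 1 := by omega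
    have f1 : a + 4 + 1 + (b + 4) - 6 = a + b + 3 := by omega
    have f2 : b + 4 - 2 = b + 2 := by omega
    have f3 : a + 4 + 1 + (b + 4) - 7 = a + b + 2 := by omega
    have f4 : b + 4 - 3 = b + 1 := by omega
    have f5 : a + 4 + 1 + (b + 4) - 8 = a + b + 1 := by omega
    have f6 : b + 4 - 4 = b := by omega
    have g1 : a + 4 + (b + 4 + 1) - 6 = a + b + 3 := by omega
    have g3 : a + 4 + (b + 4 + 1) - 7 = a + b + 2 := by omega
    have g5 : a + 4 + (b + 4 + 1) - 8 = a + b + 1 := by omega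
    rw [e1, e2, e3, e4, e5, e6, f1, f2, f3, f4, f5, f6, g1, g3, g5]
    have p1 : (a + b + 3 + 1).choose (b + 2 + 1)
        = (a + b + 3).choose (b + 2) + (a + b + 3).choose (b + 2 + 1) :=
      Nat.choose_succ_succ _ _
    have p2 : (a + b + 2 + 1).choose (b + 1 + 1)
        = (a + b + 2).choose (b + 1) + (a + b + 2).choose (b + 1 + 1) :=
      Nat.choose_succ_succ _ _
    have p3 : (a + b + 1 + 1).choose (b + 1)
        = (a + b + 1).choose b + (a + b + 1).choose (b + 1) :=
      Nat.choose_succ_succ _ _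
    omega
  · rcases eq_or_lt_of_le hil with hle | hlt
    · -- i = l + 1
      subst hle
      have hne : ¬ (l + 1 = 4) := by omega
      simp only [w, if_neg hne, if_neg (lt_irrefl (l + 1)), if_pos (Nat.lt_succ_self l)]
      have e1 : m + 1 + (l + 1) - (l + 1) - 4 = m - 3 := by omega
      have e2 : l + 1 - (l + 1) = 0 := by omega
      have e3 : m + (l + 1) - (l + 1) - 4 = m - 4 := by omega
      rw [e1, e2, e3, Nat.choose_zero_right, Nat.choose_zero_right]
      omega
    · -- 5 ≤ i ≤ l
      have hil' : i ≤ l := by omega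
      have hne : ¬ (i = 4) := by omega
      simp only [w, if_neg hne,
        if_neg (not_lt.mpr (by omega : i ≤ l + 1)),
        if_neg (not_lt.mpr hil'),
        if_neg (not_lt.mpr (by omega : i ≤ l + 1))]
      have e1 : m + 1 + (l + 1) - i - 4 = (m + l - i - 3) + 1 := by omega
      have e2 : l + 1 - i = (l - i) + 1 := by omega
      have e3 : m + 1 + l - i - 4 = m + l - i - 3 := by omega
      have e4 : m + (l + 1) - i - 4 = m + l - i - 3 := by omega
      rw [e1, e2, e3, e4, Nat.choose_succ_succ, Nat.mul_add]

/-- For all `m, l ≥ 4`, `g(m+1, l+1) = g(m+1, l) + g(m, l+1)`. -/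
theorem stmt_6 (m l : ℕ) (hm : 4 ≤ m) (hl : 4 ≤ l) :
    g (m + 1) (l + 1) = g (m + 1) l + g m (l + 1) := by
  unfold g
  have h1 : ∑ i ∈ Finset.Icc 4 (l + 1), w i (m + 1) (l + 1)
      = ∑ i ∈ Finset.Icc 4 (l + 1), (w i (m + 1) l + w i m (l + 1)) := by
    refine Finset.sum_congr rfl fun i hi => ?_
    rw [Finset.mem_Icc] at hi
    exact w_key m l i hm hl hi.1 hi.2
  rw [h1, Finset.sum_add_distrib]
  congr 1
  rw [Finset.sum_Icc_succ_top (by omega : 4 ≤ l + 1)]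
  have hz : w (l + 1) (m + 1) l = 0 := by
    simp only [w, if_neg (by omega : ¬ (l + 1 = 4)), if_pos (Nat.lt_succ_self l)]
  rw [hz, add_zero]
end

section
/- For all integers m ≥ 4 and l ≥ 5, Σ_{i=4}^{l} w_i(m,l) = C(m+l-4, l-2) − C(m+l-6, l-3) + C(m+l-8, l-5); that is, the two expressions for g(m,l) used in the paper coincide. -/
/-!
Common definitions: points in the plane, general position, distinct x-coordinates,
cups, caps, convex position, and the combinatorial functions from the paper.
-/

open Finset

private lemma stmt13_hockey (a : ℕ) : ∀ K : ℕ, ∑ j ∈ range (K+1), (a+j).choose j = (a+K+1).choose K := by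
  intro K
  induction K with
  | zero => simp
  | succ K ih =>
      rw [Finset.sum_range_succ, ih]
      have : a + (K+1) = a + K + 1 := by omega
      rw [this]
      exact (Nat.choose_succ_succ' (a+K+1) K).symm

private lemma stmt13_tri (a : ℕ) : ∀ K : ℕ, ∑ j ∈ range (K+1), (K-j) * (a+j).choose j = (a+K+1).choose (a+2) := by
  intro K
  induction K with
  | zero => simp [Nat.choose_eq_zero_of_lt]
  | succ K ih =>
      rw [Finset.sum_range_succ]
      have step : ∀ j ∈ range (K+1), (K+1-j) * (a+j).choose j
          = (K-j) * (a+j).choose j + (a+j).choose j := by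
        intro j hj
        rw [Finset.mem_range] at hj
        have : K + 1 - j = (K - j) + 1 := by omega
        rw [this, Nat.add_mul, Nat.one_mul]
      rw [Finset.sum_congr rfl step, Finset.sum_add_distrib, ih, stmt13_hockey a K]
      have h1 : K + 1 - (K+1) = 0 := by omega
      rw [h1, Nat.zero_mul, Nat.add_zero]
      have h2 : (a+K+1).choose K = (a+K+1).choose (a+1) := by
        rw [show a+1 = a+K+1-K by omega]
        exact (Nat.choose_symm (by omega)).symm
      rw [h2]
      have : a + (K+1) + 1 = (a+K+1) + 1 := by omega
      rw [this, show a+2 = (a+1)+1 from rfl, Nat.choose_succ_succ' (a+K+1) (a+1)]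
      omega

private lemma stmt13_main_nat (M L : ℕ) :
    ∑ i ∈ Finset.Icc 4 (L+5), w i (M+4) (L+5)
      = (M+L+3).choose (L+3) + (M+L+2).choose (L+2) + 2*(M+L+1).choose (L+1)
        + ((M+L+1).choose (M+2) + 4*(M+L+1).choose L) := by
  rw [← Finset.Ioc_insert_left (by omega : (4:ℕ) ≤ L+5),
    Finset.sum_insert (by simp)]
  have hw4 : w 4 (M+4) (L+5)
      = (M+L+3).choose (L+3) + (M+L+2).choose (L+2) + 2*(M+L+1).choose (L+1) := by
    simp only [w, if_pos rfl]
    rw [show M+4+(L+5)-6 = M+L+3 by omega, show L+5-2 = L+3 by omega,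
      show M+4+(L+5)-7 = M+L+2 by omega, show L+5-3 = L+2 by omega,
      show M+4+(L+5)-8 = M+L+1 by omega, show L+5-4 = L+1 by omega]
    simp
  rw [hw4]
  have hIoc : Finset.Ioc 4 (L+5) = (range (L+1)).map (addLeftEmbedding 5) := by
    rw [show range (L+1) = Finset.Icc 0 L by rw [← Finset.Ico_add_one_right_eq_Icc, Nat.Ico_zero_eq_range],
      Finset.map_add_left_Icc]
    rw [← Finset.Icc_add_one_left_eq_Ioc]
    congr 1
    omega
  rw [hIoc, Finset.sum_map]
  have hterm : ∀ j ∈ range (L+1),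
      w (addLeftEmbedding 5 j) (M+4) (L+5)
        = (fun t => (L - t + 4) * (M + t).choose t) (L + 1 - 1 - j) := by
    intro j hj
    rw [Finset.mem_range] at hj
    simp only [addLeftEmbedding_apply, w, if_neg (by omega : ¬ 5 + j = 4),
      if_neg (by omega : ¬ L + 5 < 5 + j)]
    have e1 : L + 1 - 1 - j = L - j := by omega
    have e2 : L - (L - j) = j := by omega
    have e3 : M + 4 + (L+5) - (5+j) - 4 = M + (L - j) := by omega
    have e4 : L + 5 - (5 + j) = L - j := by omega
    have e5 : 5 + j - 1 = j + 4 := by omega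
    simp only [e1, e2, e3, e4, e5]
  rw [Finset.sum_congr rfl hterm,
    Finset.sum_range_reflect (fun t => (L - t + 4) * (M + t).choose t) (L+1)]
  have hsplit : ∀ t ∈ range (L+1),
      (L - t + 4) * (M + t).choose t
        = (L - t) * (M + t).choose t + 4 * (M + t).choose t := by
    intro t _
    ring
  rw [Finset.sum_congr rfl hsplit, Finset.sum_add_distrib, stmt13_tri M L, ← Finset.mul_sum,
    stmt13_hockey M L]

/-- For all `m ≥ 4` and `l ≥ 5`,
`Σ_{i=4}^{l} wᵢ(m, l) = C(m+l-4, l-2) - C(m+l-6, l-3) + C(m+l-8, l-5)`; the two expressions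
for `g(m, l)` used in the paper coincide. -/
theorem stmt_13 (m l : ℕ) (hm : 4 ≤ m) (hl : 5 ≤ l) :
    (∑ i ∈ Finset.Icc 4 l, (w i m l : ℤ)) =
      (Nat.choose (m + l - 4) (l - 2) : ℤ) - (Nat.choose (m + l - 6) (l - 3) : ℤ)
        + (Nat.choose (m + l - 8) (l - 5) : ℤ) := by
  obtain ⟨M, rfl⟩ := Nat.exists_eq_add_of_le hm
  obtain ⟨L, rfl⟩ := Nat.exists_eq_add_of_le hl
  rw [show 4 + M = M + 4 by omega, show 5 + L = L + 5 by omega]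
  rw [← Nat.cast_sum, stmt13_main_nat M L]
  rw [show M+4+(L+5)-4 = M+L+5 by omega, show L+5-2 = L+3 by omega,
    show M+4+(L+5)-6 = M+L+3 by omega, show L+5-3 = L+2 by omega,
    show M+4+(L+5)-8 = M+L+1 by omega, show L+5-5 = L by omega]
  have s1 : (M+L+5).choose (L+3) = (M+L+5).choose (M+2) := by
    rw [show M+2 = M+L+5-(L+3) by omega]
    exact (Nat.choose_symm (by omega)).symm
  have s2 : (M+L+3).choose (L+2) = (M+L+3).choose (M+1) := by
    rw [show M+1 = M+L+3-(L+2) by omega]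
    exact (Nat.choose_symm (by omega)).symm
  have s3 : (M+L+1).choose L = (M+L+1).choose (M+1) := by
    rw [show M+1 = M+L+1-L by omega]
    exact (Nat.choose_symm (by omega)).symm
  have s4 : (M+L+3).choose (L+3) = (M+L+3).choose M := by
    rw [show L+3 = M+L+3-M by omega]
    exact Nat.choose_symm (by omega)
  have s5 : (M+L+2).choose (L+2) = (M+L+2).choose M := by
    rw [show L+2 = M+L+2-M by omega]
    exact Nat.choose_symm (by omega)
  have s6 : (M+L+1).choose (L+1) = (M+L+1).choose M := by
    rw [show L+1 = M+L+1-M by omega]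
    exact Nat.choose_symm (by omega)
  have p1 : (M+L+5).choose (M+2) = (M+L+4).choose (M+1) + (M+L+4).choose (M+2) :=
    Nat.choose_succ_succ' (M+L+4) (M+1)
  have p2 : (M+L+4).choose (M+2) = (M+L+3).choose (M+1) + (M+L+3).choose (M+2) :=
    Nat.choose_succ_succ' (M+L+3) (M+1)
  have p3 : (M+L+4).choose (M+1) = (M+L+3).choose M + (M+L+3).choose (M+1) :=
    Nat.choose_succ_succ' (M+L+3) M
  have p4 : (M+L+3).choose (M+2) = (M+L+2).choose (M+1) + (M+L+2).choose (M+2) :=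
    Nat.choose_succ_succ' (M+L+2) (M+1)
  have p5 : (M+L+3).choose (M+1) = (M+L+2).choose M + (M+L+2).choose (M+1) :=
    Nat.choose_succ_succ' (M+L+2) M
  have p6 : (M+L+2).choose (M+2) = (M+L+1).choose (M+1) + (M+L+1).choose (M+2) :=
    Nat.choose_succ_succ' (M+L+1) (M+1)
  have p7 : (M+L+2).choose (M+1) = (M+L+1).choose M + (M+L+1).choose (M+1) :=
    Nat.choose_succ_succ' (M+L+1) M
  push_cast
  omega
end

section
/- limsup_{n→∞} g(n, n-2) / C(2n-5, n-2) ≤ 13/32, where g(n, n-2) = Σ_{i=4}^{n-2} w_i(n, n-2) and the ratio is taken in the real numbers. -/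
/-!
Write `n = M + 7`. Reindexed from the top, the tail `∑_{i ≥ 5} wᵢ(n, n - 2)` is a weighted
hockey-stick sum and collapses to `C(2M+5, M) + 3 C(2M+4, M)`, so `g(n, n - 2)` is a sum of five
binomial coefficients near the middle of row `2M + 4`. After expanding factorials, each of them
and `C(2n-5, n-2)` is `(2M)! / (M!)²` times a polynomial in `M`, and
`32 g(n, n - 2) ≤ 13 C(2n-5, n-2)` becomes a polynomial inequality that holds for every `M`.
-/

open Finset

open Nat

theorem Nat.sum_range_sub_mul_add_choose (n k : ℕ) :
    ∑ i ∈ range (n + 1), (n + 1 - i) * (i + k).choose k = (n + k + 2).choose (k + 2) := by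
  induction n with
  | zero => simp
  | succ n ih =>
    have weight_succ : ∀ i ∈ range (n + 2), (n + 2 - i) * (i + k).choose k
        = (n + 1 - i) * (i + k).choose k + (i + k).choose k := by
      intro i hi
      rw [← add_one_mul]
      congr 1
      have := mem_range.1 hi
      omega
    rw [sum_congr rfl weight_succ, sum_add_distrib, sum_range_succ, ih, Nat.sub_self, zero_mul,
      add_zero, sum_range_add_choose, add_comm, show n + 1 + k + 1 = n + k + 2 by omega,
      show n + 1 + k + 2 = n + k + 2 + 1 by omega]
    exact (choose_succ_succ' (n + k + 2) (k + 1)).symm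

theorem w_add_five_sub (M j : ℕ) (hj : j ≤ M) :
    w (5 + (M - j)) (M + 7) (M + 5) = (M + 1 - j + 3) * (j + (M + 3)).choose (M + 3) := by
  rw [w, if_neg (by omega), if_neg (by omega), ← choose_symm_add]
  congr 2 <;> omega

theorem g_add_seven_eq (M : ℕ) :
    g (M + 7) (M + 5) = (2 * M + 6).choose (M + 3) + (2 * M + 5).choose (M + 2)
      + 2 * (2 * M + 4).choose (M + 1) + (2 * M + 5).choose (M + 5)
      + 3 * (2 * M + 4).choose (M + 4) := by
  have tail : ∑ i ∈ range (M + 1), w (5 + i) (M + 7) (M + 5)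
      = (2 * M + 5).choose (M + 5) + 3 * (2 * M + 4).choose (M + 4) := by
    rw [← sum_range_reflect, Nat.add_sub_cancel, sum_congr rfl fun j hj => w_add_five_sub M j ?_]
    · simp only [add_mul, sum_add_distrib, ← mul_sum, sum_range_sub_mul_add_choose,
        sum_range_add_choose]
      ring_nf
    · have := mem_range.1 hj; omega
  rw [g, ← Ico_add_one_right_eq_Icc, sum_Ico_eq_sum_range, show M + 5 + 1 - 4 = M + 1 + 1 by omega,
    sum_range_succ', add_zero, w, if_pos rfl]
  simp only [show ∀ k, 4 + (k + 1) = 5 + k by omega, tail,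
    show M + 7 + (M + 5) - 6 = 2 * M + 6 by omega, show M + 5 - 2 = M + 3 by omega,
    show M + 7 + (M + 5) - 7 = 2 * M + 5 by omega, show M + 5 - 3 = M + 2 by omega,
    show M + 7 + (M + 5) - 8 = 2 * M + 4 by omega, show M + 5 - 4 = M + 1 by omega]
  ring

theorem thirty_two_mul_g_le (M : ℕ) :
    32 * g (M + 7) (M + 5) ≤ 13 * (2 * M + 9).choose (M + 5) := by
  have cast_choose : ∀ {a b : ℕ}, a ≤ b → (b.choose a : ℝ) = b ! / (a ! * (b - a)!) :=
    Nat.cast_choose ℝ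
  rw [g_add_seven_eq, ← Nat.cast_le (α := ℝ)]
  push_cast
  rw [cast_choose (by omega), cast_choose (by omega), cast_choose (by omega),
    cast_choose (by omega), cast_choose (by omega), cast_choose (by omega),
    show 2 * M + 6 - (M + 3) = M + 3 by omega, show 2 * M + 5 - (M + 2) = M + 3 by omega,
    show 2 * M + 4 - (M + 1) = M + 3 by omega, show 2 * M + 5 - (M + 5) = M by omega,
    show 2 * M + 4 - (M + 4) = M by omega, show 2 * M + 9 - (M + 5) = M + 4 by omega]
  simp only [Nat.factorial_succ]
  push_cast
  field_simp
  have hM : (0 : ℝ) ≤ M := M.cast_nonneg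
  nlinarith [mul_nonneg hM hM, mul_nonneg (mul_nonneg hM hM) hM]

/-- `limsup_{n → ∞} g(n, n-2) / C(2n-5, n-2) ≤ 13/32`, the ratio being
taken in the real numbers. -/
theorem stmt_16 :
    Filter.limsup (fun n : ℕ => (g n (n - 2) : ℝ) / (Nat.choose (2 * n - 5) (n - 2) : ℝ))
      Filter.atTop ≤ 13 / 32 := by
  refine Filter.limsup_le_of_le (Filter.isCoboundedUnder_le_of_le Filter.atTop
    fun n => by positivity) ?_
  filter_upwards [Filter.eventually_ge_atTop 7] with n hn
  obtain ⟨M, rfl⟩ : ∃ M, n = M + 7 := ⟨n - 7, by omega⟩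
  rw [show M + 7 - 2 = M + 5 by omega, show 2 * (M + 7) - 5 = 2 * M + 9 by omega,
    div_le_iff₀ (by exact_mod_cast choose_pos (by omega))]
  have key : (32 : ℝ) * g (M + 7) (M + 5) ≤ 13 * (2 * M + 9).choose (M + 5) := by
    exact_mod_cast thirty_two_mul_g_le M
  linarith
end
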